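/- Under the standing assumptions on the convex quadrilateral a, b, c, d and the interior point o, one has Δ(c,d,a)² ≤ 4·Δ(o,d,a)·Δ(o,c,d), with equality if and only if o = (a+c)/2 is the midpoint of the diagonal [a,c]; and Δ(a,b,c)² ≥ 4·Δ(o,b,c)·Δ(o,a,b), again with equality if and only if o = (a+c)/2. -/

import Mathlib

/-- The standard 2×2 determinant on `ℝ × ℝ`. -/
noncomputable def det2 (x y : ℝ × ℝ) : ℝ := x.1 * y.2 - x.2 * y.1

/-- The area `Δ(p,q,r) = |det(q−p, r−p)|/2` of the triangle with vertices `p, q, r`. -/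
noncomputable def tri (p q r : ℝ × ℝ) : ℝ := |det2 (q - p) (r - p)| / 2

/-!
Write `T, U, P, Q` for the signed areas of `cda, abc, abd, bcd` and `x, y, u, v` for those of
`oda, ocd, oab, obc`. Expanding `u` and `v` in barycentric coordinates with respect to `cda`
turns the forbidden-region bounds `2u ≤ U`, `2v ≤ U` into two linear inequalities in
`ξ = 2x - T` and `η = 2y - T`, with matrix `[[Q - T, -P], [-Q, P - T]]`. Since `P + Q = U + T`,
its determinant is `-TU < 0`, and non-admissibility of `d` says exactly that its diagonal entries
`U - P`, `U - Q` are non-negative; so its inverse is entrywise non-positive and `ξ, η ≥ 0`.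
Then `4xy = (T + ξ)(T + η) ≥ T²`, while `4uv ≤ U²` is immediate, and equality forces `o` to have
barycentric coordinates `(1/2, 0, 1/2)`, i.e. to be the midpoint of `ac`.
-/

noncomputable def signedArea (p q r : ℝ × ℝ) : ℝ := det2 (q - p) (r - p) / 2

theorem signedArea_rotate (p q r : ℝ × ℝ) : signedArea q r p = signedArea p q r := by
  simp only [signedArea, det2, Prod.fst_sub, Prod.snd_sub]; ring

theorem tri_eq_abs_signedArea (p q r : ℝ × ℝ) : tri p q r = |signedArea p q r| := by
  rw [tri, signedArea, abs_div, abs_two]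

theorem signedArea_add_signedArea (a b c d : ℝ × ℝ) :
    signedArea a b d + signedArea b c d = signedArea a b c + signedArea c d a := by
  simp only [signedArea, det2, Prod.fst_sub, Prod.snd_sub]; ring

theorem eq_midpoint_iff_signedArea {p q r : ℝ × ℝ} (o : ℝ × ℝ) (h : signedArea p q r ≠ 0) :
    signedArea p q r = 2 * signedArea o q r ∧ signedArea p q r = 2 * signedArea o p q ↔
      o = (1 / 2 : ℝ) • (p + r) := by
  constructor
  · rintro ⟨h₁, h₂⟩
    have h' : det2 (q - p) (r - p) ≠ 0 := by simpa [signedArea] using h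
    simp only [signedArea, det2, Prod.fst_sub, Prod.snd_sub] at h₁ h₂ h'
    refine Prod.ext ?_ ?_ <;>
      simp only [Prod.smul_fst, Prod.smul_snd, Prod.fst_add, Prod.snd_add, smul_eq_mul] <;>
      refine mul_left_cancel₀ h' ?_
    · linear_combination (q.1 - p.1) * h₁ + (q.1 - r.1) * h₂
    · linear_combination (q.2 - p.2) * h₁ + (q.2 - r.2) * h₂
  · rintro rfl
    simp only [signedArea, det2, Prod.fst_sub, Prod.snd_sub, Prod.smul_fst, Prod.smul_snd,
      Prod.fst_add, Prod.snd_add, smul_eq_mul]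
    constructor <;> ring

theorem nonneg_of_mul_le_mul_of_mul_le_mul {α β P Q ξ η : ℝ} (hβ : 0 ≤ β) (hP : 0 ≤ P)
    (hdet : α * β < P * Q) (h₁ : α * ξ ≤ P * η) (h₂ : β * η ≤ Q * ξ) : 0 ≤ ξ := by
  refine nonneg_of_mul_nonpos_right ?_ (sub_neg.2 hdet)
  calc (α * β - P * Q) * ξ = β * (α * ξ - P * η) + P * (β * η - Q * ξ) := by ring
    _ ≤ 0 := add_nonpos (mul_nonpos_of_nonneg_of_nonpos hβ (sub_nonpos.2 h₁))
        (mul_nonpos_of_nonneg_of_nonpos hP (sub_nonpos.2 h₂))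

theorem le_two_mul_signedArea_of_forbidden {a b c d o : ℝ × ℝ}
    (hT : 0 < signedArea c d a) (hU : 0 < signedArea a b c)
    (hP : signedArea a b d ≤ signedArea a b c) (hQ : signedArea b c d ≤ signedArea a b c)
    (hu : 2 * signedArea o a b ≤ signedArea a b c) (hv : 2 * signedArea o b c ≤ signedArea a b c) :
    signedArea c d a ≤ 2 * signedArea o d a ∧ signedArea c d a ≤ 2 * signedArea o c d := by
  have hsplit := signedArea_add_signedArea a b c d
  have e₁ : signedArea c d a * (signedArea a b c - 2 * signedArea o a b) =
      signedArea a b d * (2 * signedArea o c d - signedArea c d a) -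
        (signedArea b c d - signedArea c d a) * (2 * signedArea o d a - signedArea c d a) := by
    simp only [signedArea, det2, Prod.fst_sub, Prod.snd_sub]; ring
  have e₂ : signedArea c d a * (signedArea a b c - 2 * signedArea o b c) =
      signedArea b c d * (2 * signedArea o d a - signedArea c d a) -
        (signedArea a b d - signedArea c d a) * (2 * signedArea o c d - signedArea c d a) := by
    simp only [signedArea, det2, Prod.fst_sub, Prod.snd_sub]; ring
  set T := signedArea c d a
  set U := signedArea a b c
  set P := signedArea a b d
  set Q := signedArea b c d
  set ξ := 2 * signedArea o d a - T
  set η := 2 * signedArea o c d - T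
  have h₁ : (Q - T) * ξ ≤ P * η := by
    have := mul_nonneg hT.le (sub_nonneg.2 hu); linarith
  have h₂ : (P - T) * η ≤ Q * ξ := by
    have := mul_nonneg hT.le (sub_nonneg.2 hv); linarith
  have hdet : (Q - T) * (P - T) - P * Q = -(T * U) := by linear_combination (-T) * hsplit
  have hξ : 0 ≤ ξ := nonneg_of_mul_le_mul_of_mul_le_mul (by linarith) (by linarith)
    (by nlinarith [mul_pos hT hU]) h₁ h₂
  have hη : 0 ≤ η := nonneg_of_mul_le_mul_of_mul_le_mul (by linarith) (by linarith)
    (by nlinarith [mul_pos hT hU]) h₂ h₁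
  constructor <;> linarith

theorem stmt_5_general (a b c d o : ℝ × ℝ)
    (hc1 : 0 < det2 (b - a) (c - a))
    (hc3 : 0 < det2 (d - c) (a - c))
    (ho1 : 0 < det2 (b - a) (o - a)) (ho2 : 0 < det2 (c - b) (o - b))
    (hna1 : tri a b d ≤ tri a b c) (hna2 : tri b c d ≤ tri a b c)
    (hf1 : 2 * tri o a b ≤ tri a b c) (hf2 : 2 * tri o b c ≤ tri a b c) :
    (tri c d a ^ 2 ≤ 4 * (tri o d a * tri o c d) ∧
      (tri c d a ^ 2 = 4 * (tri o d a * tri o c d) ↔ o = (1 / 2 : ℝ) • (a + c))) ∧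
    (4 * (tri o b c * tri o a b) ≤ tri a b c ^ 2 ∧
      (tri a b c ^ 2 = 4 * (tri o b c * tri o a b) ↔ o = (1 / 2 : ℝ) • (a + c))) := by
  have hU : 0 < signedArea a b c := half_pos hc1
  have hT : 0 < signedArea c d a := half_pos hc3
  have hu : 0 < signedArea o a b := by rw [← signedArea_rotate]; exact half_pos ho1
  have hv : 0 < signedArea o b c := by rw [← signedArea_rotate]; exact half_pos ho2
  simp only [tri_eq_abs_signedArea, abs_of_pos hU, abs_of_pos hT, abs_of_pos hu,
    abs_of_pos hv] at hna1 hna2 hf1 hf2 ⊢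
  obtain ⟨hx, hy⟩ := le_two_mul_signedArea_of_forbidden hT hU ((le_abs_self _).trans hna1)
    ((le_abs_self _).trans hna2) hf1 hf2
  rw [abs_of_pos (by linarith), abs_of_pos (by linarith), sq, sq]
  refine ⟨⟨?_, ?_⟩, ?_, ?_⟩
  · nlinarith [mul_le_mul hx hy hT.le (by linarith)]
  · rw [show 4 * (signedArea o d a * signedArea o c d) =
        2 * signedArea o d a * (2 * signedArea o c d) by ring,
      mul_eq_mul_iff_eq_and_eq_of_pos hx hy hT (by linarith),
      eq_midpoint_iff_signedArea o hT.ne', add_comm]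
  · nlinarith [mul_le_mul hf2 hf1 (by linarith) hU.le]
  · rw [show 4 * (signedArea o b c * signedArea o a b) =
        2 * signedArea o b c * (2 * signedArea o a b) by ring, eq_comm,
      mul_eq_mul_iff_eq_and_eq_of_pos hf2 hf1 (by linarith) hU, ← eq_midpoint_iff_signedArea o hU.ne']
    exact and_congr eq_comm eq_comm

/-- `a b c d` is a convex quadrilateral (counterclockwise), `o` an
interior point, the vertex `d` is non-admissible, and `o` lies in the forbidden
region. -/
theorem stmt_5 (a b c d o : ℝ × ℝ)
    (hc1 : 0 < det2 (b - a) (c - a)) (hc2 : 0 < det2 (c - b) (d - b))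
    (hc3 : 0 < det2 (d - c) (a - c)) (hc4 : 0 < det2 (a - d) (b - d))
    (ho1 : 0 < det2 (b - a) (o - a)) (ho2 : 0 < det2 (c - b) (o - b))
    (ho3 : 0 < det2 (d - c) (o - c)) (ho4 : 0 < det2 (a - d) (o - d))
    (hna1 : tri a b d ≤ tri a b c) (hna2 : tri b c d ≤ tri a b c)
    (hf1 : 2 * tri o a b ≤ tri a b c) (hf2 : 2 * tri o b c ≤ tri a b c)
    (hf3 : 2 * tri o d a ≤ tri a b d) (hf4 : 2 * tri o c d ≤ tri b c d) :
    (tri c d a ^ 2 ≤ 4 * (tri o d a * tri o c d) ∧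
      (tri c d a ^ 2 = 4 * (tri o d a * tri o c d) ↔ o = (1 / 2 : ℝ) • (a + c))) ∧
    (4 * (tri o b c * tri o a b) ≤ tri a b c ^ 2 ∧
      (tri a b c ^ 2 = 4 * (tri o b c * tri o a b) ↔ o = (1 / 2 : ℝ) • (a + c))) :=
  stmt_5_general a b c d o hc1 hc3 ho1 ho2 hna1 hna2 hf1 hf2
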